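/- With the notation of the previous statements (α > 1, 0 ≤ Λ < Γ(α), K = K₁ + K₂), for all t,s ≥ 0 we have 0 ≤ K(t,s) ≤ t^(α-1)/(Γ(α)-Λ) and 0 ≤ K(t,s)/(1+t^(α-1)) ≤ 1/(Γ(α)-Λ). -/

import Mathlib

/-! Since `0 ≤ K₁(t,s) ≤ t^(α-1)/Γ(α)`, the integral in `K₂` lies between `0` and `Λ/Γ(α)`, and
`t^(α-1)/Γ(α) + t^(α-1)/(Γ(α)-Λ) · Λ/Γ(α) = t^(α-1)/(Γ(α)-Λ)`. -/

open Real MeasureTheory Set Filter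

noncomputable def K1 (α : ℝ) (t s : ℝ) : ℝ :=
  if s ≤ t then (t ^ (α - 1) - (t - s) ^ (α - 1)) / Real.Gamma α
  else t ^ (α - 1) / Real.Gamma α

section K1

variable {α : ℝ}

lemma K1_le (hα : 0 < α) (t s : ℝ) : K1 α t s ≤ t ^ (α - 1) / Gamma α := by
  have hG : 0 ≤ Gamma α := (Gamma_pos_of_pos hα).le
  unfold K1
  split_ifs with hst
  · have : 0 ≤ (t - s) ^ (α - 1) := rpow_nonneg (sub_nonneg.2 hst) _
    gcongr
    linarith
  · exact le_rfl

lemma K1_nonneg (hα : 1 ≤ α) {t s : ℝ} (ht : 0 ≤ t) (hs : 0 ≤ s) : 0 ≤ K1 α t s := by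
  have hG : 0 ≤ Gamma α := (Gamma_pos_of_pos (by linarith)).le
  unfold K1
  split_ifs with hst
  · have : (t - s) ^ (α - 1) ≤ t ^ (α - 1) :=
      rpow_le_rpow (sub_nonneg.2 hst) (by linarith) (by linarith)
    exact div_nonneg (sub_nonneg.2 this) hG
  · exact div_nonneg (rpow_nonneg ht _) hG

variable {h : ℝ → ℝ} {s : ℝ}

lemma setIntegral_mul_K1_nonneg (hα : 1 ≤ α) (hh : ∀ t, 0 ≤ h t) (hs : 0 ≤ s) :
    0 ≤ ∫ τ in Ioi (0 : ℝ), h τ * K1 α τ s :=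
  setIntegral_nonneg measurableSet_Ioi fun τ hτ =>
    mul_nonneg (hh τ) (K1_nonneg hα (le_of_lt hτ) hs)

lemma setIntegral_mul_K1_le (hα : 1 ≤ α) (hh : ∀ t, 0 ≤ h t)
    (hint : IntegrableOn (fun t => h t * t ^ (α - 1)) (Ioi 0)) (hs : 0 ≤ s) :
    ∫ τ in Ioi (0 : ℝ), h τ * K1 α τ s ≤
      (∫ τ in Ioi (0 : ℝ), h τ * τ ^ (α - 1)) / Gamma α := by
  rw [← integral_div]
  refine integral_mono_of_nonneg ?_ (hint.div_const _) (ae_of_all _ fun τ => ?_)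
  · exact (ae_restrict_iff' measurableSet_Ioi).2 <| ae_of_all _ fun τ hτ =>
      mul_nonneg (hh τ) (K1_nonneg hα (le_of_lt hτ) hs)
  · show h τ * K1 α τ s ≤ h τ * τ ^ (α - 1) / Gamma α
    rw [mul_div_assoc]
    exact mul_le_mul_of_nonneg_left (K1_le (by linarith) τ s) (hh τ)

end K1

lemma add_div_sub_mul_le_div_sub {a k I Γ Λ : ℝ} (ha : 0 ≤ a) (hΓ : 0 < Γ) (hΛ : Λ < Γ)
    (hk : k ≤ a / Γ) (hI : I ≤ Λ / Γ) : k + a / (Γ - Λ) * I ≤ a / (Γ - Λ) := by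
  have hΓΛ : 0 < Γ - Λ := sub_pos.2 hΛ
  calc k + a / (Γ - Λ) * I ≤ a / Γ + a / (Γ - Λ) * (Λ / Γ) := by gcongr
    _ = a / (Γ - Λ) := by field_simp; ring

lemma div_one_add_le_one_div {a c x : ℝ} (ha : 0 ≤ a) (hc : 0 < c) (hx : x ≤ a / c) :
    x / (1 + a) ≤ 1 / c := by
  rw [div_le_div_iff₀ (by linarith) hc]
  have := (le_div_iff₀ hc).1 hx
  linarith

theorem stmt2_general (α : ℝ) (hα : 1 < α) (h : ℝ → ℝ) (hh : ∀ t, 0 ≤ h t)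
    (hint : IntegrableOn (fun t => h t * t ^ (α - 1)) (Ioi 0))
    (Λ : ℝ) (hΛ : Λ = ∫ t in Ioi (0:ℝ), h t * t ^ (α - 1))
    (hΛlt : Λ < Real.Gamma α)
    (K2 K : ℝ → ℝ → ℝ)
    (hK2 : ∀ t s, K2 t s =
      t ^ (α - 1) / (Real.Gamma α - Λ) * ∫ τ in Ioi (0:ℝ), h τ * K1 α τ s)
    (hK : ∀ t s, K t s = K1 α t s + K2 t s) :
    ∀ t s : ℝ, 0 ≤ t → 0 ≤ s →
      (0 ≤ K t s ∧ K t s ≤ t ^ (α - 1) / (Real.Gamma α - Λ)) ∧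
      (0 ≤ K t s / (1 + t ^ (α - 1)) ∧
        K t s / (1 + t ^ (α - 1)) ≤ 1 / (Real.Gamma α - Λ)) := by
  intro t s ht hs
  have hG : 0 < Gamma α := Gamma_pos_of_pos (by linarith)
  have hGΛ : 0 < Gamma α - Λ := sub_pos.2 hΛlt
  have htα : 0 ≤ t ^ (α - 1) := rpow_nonneg ht _
  have hI0 := setIntegral_mul_K1_nonneg hα.le hh hs
  have hIle := setIntegral_mul_K1_le hα.le hh hint hs
  rw [← hΛ] at hIle
  have hKnn : 0 ≤ K t s := by
    rw [hK, hK2]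
    exact add_nonneg (K1_nonneg hα.le ht hs) (mul_nonneg (div_nonneg htα hGΛ.le) hI0)
  have hKle : K t s ≤ t ^ (α - 1) / (Gamma α - Λ) := by
    rw [hK, hK2]
    exact add_div_sub_mul_le_div_sub htα hG hΛlt (K1_le (by linarith) t s) hIle
  exact ⟨⟨hKnn, hKle⟩, div_nonneg hKnn (by positivity), div_one_add_le_one_div htα hGΛ hKle⟩

theorem stmt2 (α : ℝ) (hα : 1 < α) (h : ℝ → ℝ) (hh : ∀ t, 0 ≤ h t)
    (hint : IntegrableOn (fun t => h t * t ^ (α - 1)) (Ioi 0))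
    (Λ : ℝ) (hΛ : Λ = ∫ t in Ioi (0:ℝ), h t * t ^ (α - 1))
    (hΛ0 : 0 ≤ Λ) (hΛlt : Λ < Real.Gamma α)
    (K2 K : ℝ → ℝ → ℝ)
    (hK2 : ∀ t s, K2 t s =
      t ^ (α - 1) / (Real.Gamma α - Λ) * ∫ τ in Ioi (0:ℝ), h τ * K1 α τ s)
    (hK : ∀ t s, K t s = K1 α t s + K2 t s) :
    ∀ t s : ℝ, 0 ≤ t → 0 ≤ s →
      (0 ≤ K t s ∧ K t s ≤ t ^ (α - 1) / (Real.Gamma α - Λ)) ∧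
      (0 ≤ K t s / (1 + t ^ (α - 1)) ∧
        K t s / (1 + t ^ (α - 1)) ≤ 1 / (Real.Gamma α - Λ)) :=
  stmt2_general α hα h hh hint Λ hΛ hΛlt K2 K hK2 hK
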